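/- Let x_L < x_R be reals with midpoint M = (x_L+x_R)/2, and let μ be a Borel probability measure on ℝ with finite first moment. Then ∫ |y − x_L| d(T_{x_L,x_R}μ)(y) = ∫ |y − x_L| dμ(y) and ∫ |y − x_R| d(T_{x_L,x_R}μ)(y) = ∫ |y − x_R| dμ(y); that is, the transformation T preserves the expected cost of each of the two agents located at x_L and x_R. -/

import Mathlib

/-!
The map `T` only moves mass inside `[x_L, x_R]`, and within each of the intervals
`(x_L, M)` and `(M, x_R)` it replaces the restriction of `μ` by the unique measure on the two
endpoints with the same mass and the same barycentre. Both cost functions `|y - x_L|` and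
`|y - x_R|` are affine on `[x_L, x_R]`, and the integral of an affine function only sees the
mass and the barycentre, so both expected costs are unchanged.
-/

open MeasureTheory

/-- The transformation `T` from the paper: given `x_L < x_R` with midpoint
`M = (x_L+x_R)/2` and a measure `μ`, the transformed measure agrees with `μ` outside
`[x_L, x_R]`, assigns measure zero to `(x_L,M) ∪ (M,x_R)`, and moves the mass `p_ℓ` of
`(x_L,M)` (with conditional mean `π_ℓ = q_ℓ x_L + (1-q_ℓ) M`) onto the points `x_L` and
`M` with weights `q_ℓ p_ℓ` and `(1-q_ℓ) p_ℓ`, and symmetrically the mass `p_r` of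
`(M,x_R)` onto `x_R` and `M`. (When `p_ℓ = 0` the products `q_ℓ p_ℓ` and `(1-q_ℓ) p_ℓ`
vanish, and similarly on the right.) -/
noncomputable def Tmeas (xL xR : ℝ) (μ : Measure ℝ) : Measure ℝ :=
  let M := (xL + xR) / 2
  let pl := (μ (Set.Ioo xL M)).toReal
  let pr := (μ (Set.Ioo M xR)).toReal
  let πl := (∫ y in Set.Ioo xL M, y ∂μ) / pl
  let πr := (∫ y in Set.Ioo M xR, y ∂μ) / pr
  let ql := (M - πl) / (M - xL)
  let qr := (πr - M) / (xR - M)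
  μ.restrict (Set.Iio xL ∪ Set.Ioi xR)
    + (μ {xL} + ENNReal.ofReal (ql * pl)) • Measure.dirac xL
    + (μ {M} + ENNReal.ofReal ((1 - ql) * pl + (1 - qr) * pr)) • Measure.dirac M
    + (μ {xR} + ENNReal.ofReal (qr * pr)) • Measure.dirac xR

open Set

section SetIntegral

variable {α : Type*} [MeasurableSpace α] {μ : Measure α} {s : Set α}

lemma setIntegral_div_measureReal_mul (hs : μ s ≠ ⊤) (f : α → ℝ) :
    (∫ x in s, f x ∂μ) / μ.real s * μ.real s = ∫ x in s, f x ∂μ := by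
  rcases eq_or_ne (μ.real s) 0 with h0 | h0
  · rw [measureReal_eq_zero_iff hs] at h0
    simp [Measure.restrict_eq_zero.mpr h0]
  · exact div_mul_cancel₀ _ h0

lemma setIntegral_insert [MeasurableSingletonClass α] {E : Type*} [NormedAddCommGroup E]
    [NormedSpace ℝ E] [CompleteSpace E] {f : α → E} {a : α} (ha : a ∉ s) (hs : MeasurableSet s)
    (hf : IntegrableOn f (insert a s) μ) :
    ∫ x in insert a s, f x ∂μ = μ.real {a} • f a + ∫ x in s, f x ∂μ := by
  rw [insert_eq, setIntegral_union (disjoint_singleton_left.2 ha) hs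
      (hf.mono_set (singleton_subset_iff.2 (mem_insert a s)))
      (hf.mono_set (subset_insert a s)),
    Measure.restrict_singleton, integral_smul_measure, integral_dirac, measureReal_def]

lemma integrable_smul_dirac [MeasurableSingletonClass α] {E : Type*} [NormedAddCommGroup E]
    {f : α → E} {c : ENNReal} (hc : c ≠ ⊤) (a : α) : Integrable f (c • Measure.dirac a) :=
  (integrable_dirac enorm_lt_top).smul_measure hc

end SetIntegral

section IntervalSplit

variable {μ : Measure ℝ} {a b : ℝ}

/- The masses placed at `a` and at `b` when the restriction of `μ` to `(a, b)` is replaced by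
a measure on `{a, b}` with the same mass and barycentre. -/
noncomputable def lowerWeight (μ : Measure ℝ) (a b : ℝ) : ℝ :=
  (b - (∫ y in Ioo a b, y ∂μ) / μ.real (Ioo a b)) / (b - a) * μ.real (Ioo a b)

noncomputable def upperWeight (μ : Measure ℝ) (a b : ℝ) : ℝ :=
  ((∫ y in Ioo a b, y ∂μ) / μ.real (Ioo a b) - a) / (b - a) * μ.real (Ioo a b)

variable [IsLocallyFiniteMeasure μ]

lemma lowerWeight_eq_div :
    lowerWeight μ a b = (b * μ.real (Ioo a b) - ∫ y in Ioo a b, y ∂μ) / (b - a) := by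
  rw [← setIntegral_div_measureReal_mul measure_Ioo_lt_top.ne, lowerWeight]
  ring

lemma upperWeight_eq_div :
    upperWeight μ a b = ((∫ y in Ioo a b, y ∂μ) - a * μ.real (Ioo a b)) / (b - a) := by
  rw [← setIntegral_div_measureReal_mul measure_Ioo_lt_top.ne, upperWeight]
  ring

lemma integrableOn_Ioo_id : IntegrableOn (fun y : ℝ => y) (Ioo a b) μ :=
  continuous_id.integrableOn_Icc.mono_set Ioo_subset_Icc_self

lemma lowerWeight_nonneg (hab : a < b) : 0 ≤ lowerWeight μ a b := by
  have hle : ∫ y in Ioo a b, y ∂μ ≤ b * μ.real (Ioo a b) := by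
    calc ∫ y in Ioo a b, y ∂μ ≤ ∫ _ in Ioo a b, b ∂μ :=
          setIntegral_mono_on integrableOn_Ioo_id (integrableOn_const measure_Ioo_lt_top.ne)
            measurableSet_Ioo fun y hy => hy.2.le
      _ = b * μ.real (Ioo a b) := by rw [setIntegral_const, smul_eq_mul, mul_comm]
  rw [lowerWeight_eq_div]
  exact div_nonneg (sub_nonneg.2 hle) (sub_nonneg.2 hab.le)

lemma upperWeight_nonneg (hab : a < b) : 0 ≤ upperWeight μ a b := by
  have hge : a * μ.real (Ioo a b) ≤ ∫ y in Ioo a b, y ∂μ :=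
    setIntegral_ge_of_const_le_real measurableSet_Ioo measure_Ioo_lt_top.ne
      (fun y hy => hy.1.le) integrableOn_Ioo_id
  rw [upperWeight_eq_div]
  exact div_nonneg (sub_nonneg.2 hge) (sub_nonneg.2 hab.le)

lemma lowerWeight_add_upperWeight (hab : a ≠ b) :
    lowerWeight μ a b + upperWeight μ a b = μ.real (Ioo a b) := by
  have : b - a ≠ 0 := sub_ne_zero.2 hab.symm
  rw [lowerWeight_eq_div, upperWeight_eq_div]
  field_simp
  ring

lemma mul_lowerWeight_add_mul_upperWeight (hab : a ≠ b) :
    a * lowerWeight μ a b + b * upperWeight μ a b = ∫ y in Ioo a b, y ∂μ := by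
  have : b - a ≠ 0 := sub_ne_zero.2 hab.symm
  rw [lowerWeight_eq_div, upperWeight_eq_div]
  field_simp
  ring

lemma setIntegral_Ioo_eq_of_eqOn_affine {f : ℝ → ℝ} {c d : ℝ} (hab : a < b)
    (hf : ∀ y ∈ Icc a b, f y = c * y + d) :
    ∫ y in Ioo a b, f y ∂μ = lowerWeight μ a b * f a + upperWeight μ a b * f b := by
  rw [setIntegral_congr_fun measurableSet_Ioo fun y hy => hf y (Ioo_subset_Icc_self hy),
    integral_add (integrableOn_Ioo_id.const_mul c) (integrableOn_const measure_Ioo_lt_top.ne),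
    integral_const_mul, setIntegral_const, smul_eq_mul, hf a (left_mem_Icc.2 hab.le),
    hf b (right_mem_Icc.2 hab.le)]
  linear_combination (-c) * mul_lowerWeight_add_mul_upperWeight (μ := μ) hab.ne
    - d * lowerWeight_add_upperWeight (μ := μ) hab.ne

end IntervalSplit

lemma setIntegral_Icc_eq {μ : Measure ℝ} {f : ℝ → ℝ} {a m b : ℝ} (ham : a < m) (hmb : m < b)
    (hf : Integrable f μ) :
    ∫ y in Icc a b, f y ∂μ = μ.real {a} * f a + ∫ y in Ioo a m, f y ∂μ + μ.real {m} * f m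
      + ∫ y in Ioo m b, f y ∂μ + μ.real {b} * f b := by
  rw [← Ioc_insert_left (ham.trans hmb).le, ← Ioc_union_Ioc_eq_Ioc ham.le hmb.le,
    ← Ioo_insert_right ham, ← Ioo_insert_right hmb,
    setIntegral_insert (by simp [ham.ne, (ham.trans hmb).ne, lt_asymm ham])
      ((measurableSet_Ioo.insert m).union (measurableSet_Ioo.insert b)) hf.integrableOn,
    setIntegral_union (by simp [hmb.ne', hmb.le]) (measurableSet_Ioo.insert b)
      hf.integrableOn hf.integrableOn,
    setIntegral_insert (by simp) measurableSet_Ioo hf.integrableOn,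
    setIntegral_insert (by simp) measurableSet_Ioo hf.integrableOn]
  simp only [smul_eq_mul]
  ring

section Transformation

variable {μ : Measure ℝ} {xL xR : ℝ}

lemma Tmeas_eq (h : xL < xR) :
    Tmeas xL xR μ = μ.restrict (Iio xL ∪ Ioi xR)
      + (μ {xL} + ENNReal.ofReal (lowerWeight μ xL ((xL + xR) / 2))) • Measure.dirac xL
      + (μ {(xL + xR) / 2} + ENNReal.ofReal (upperWeight μ xL ((xL + xR) / 2)
          + lowerWeight μ ((xL + xR) / 2) xR)) • Measure.dirac ((xL + xR) / 2)
      + (μ {xR} + ENNReal.ofReal (upperWeight μ ((xL + xR) / 2) xR)) • Measure.dirac xR := by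
  have hL : (xL + xR) / 2 - xL ≠ 0 := by linarith
  have hR : xR - (xL + xR) / 2 ≠ 0 := by linarith
  unfold Tmeas lowerWeight upperWeight
  simp only [measureReal_def]
  congr 5
  rw [one_sub_div hL, one_sub_div hR]
  ring

variable [IsLocallyFiniteMeasure μ]

lemma integral_Tmeas {f : ℝ → ℝ} (h : xL < xR) (hf : IntegrableOn f (Iio xL ∪ Ioi xR) μ) :
    ∫ y, f y ∂Tmeas xL xR μ = ∫ y in Iio xL ∪ Ioi xR, f y ∂μ
      + (μ.real {xL} + lowerWeight μ xL ((xL + xR) / 2)) * f xL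
      + (μ.real {(xL + xR) / 2} + (upperWeight μ xL ((xL + xR) / 2)
          + lowerWeight μ ((xL + xR) / 2) xR)) * f ((xL + xR) / 2)
      + (μ.real {xR} + upperWeight μ ((xL + xR) / 2) xR) * f xR := by
  have hM1 : xL < (xL + xR) / 2 := by linarith
  have hM2 : (xL + xR) / 2 < xR := by linarith
  have hdirac (x r : ℝ) : Integrable f ((μ {x} + ENNReal.ofReal r) • Measure.dirac x) :=
    integrable_smul_dirac
      (ENNReal.add_ne_top.2 ⟨measure_singleton_lt_top.ne, ENNReal.ofReal_ne_top⟩) x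
  have hrest : Integrable f (μ.restrict (Iio xL ∪ Ioi xR)) := hf
  rw [Tmeas_eq h, integral_add_measure (((hrest.add_measure (hdirac _ _)).add_measure
      (hdirac _ _))) (hdirac _ _),
    integral_add_measure (hrest.add_measure (hdirac _ _)) (hdirac _ _),
    integral_add_measure hrest (hdirac _ _)]
  simp only [integral_smul_measure, integral_dirac, smul_eq_mul]
  rw [ENNReal.toReal_add measure_singleton_lt_top.ne ENNReal.ofReal_ne_top,
    ENNReal.toReal_add measure_singleton_lt_top.ne ENNReal.ofReal_ne_top,
    ENNReal.toReal_add measure_singleton_lt_top.ne ENNReal.ofReal_ne_top,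
    ENNReal.toReal_ofReal (lowerWeight_nonneg hM1), ENNReal.toReal_ofReal (upperWeight_nonneg hM2),
    ENNReal.toReal_ofReal (add_nonneg (upperWeight_nonneg hM1) (lowerWeight_nonneg hM2))]
  simp only [measureReal_def]

lemma integral_Tmeas_eq_of_eqOn_affine {f : ℝ → ℝ} {c d : ℝ} (h : xL < xR) (hf : Integrable f μ)
    (hf_affine : ∀ y ∈ Icc xL xR, f y = c * y + d) :
    ∫ y, f y ∂Tmeas xL xR μ = ∫ y, f y ∂μ := by
  have hM1 : xL < (xL + xR) / 2 := by linarith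
  have hM2 : (xL + xR) / 2 < xR := by linarith
  have hcompl : (Iio xL ∪ Ioi xR)ᶜ = Icc xL xR := by
    rw [compl_union, compl_Iio, compl_Ioi, Ici_inter_Iic]
  rw [integral_Tmeas h hf.integrableOn,
    ← integral_add_compl (measurableSet_Iio.union measurableSet_Ioi) hf, hcompl,
    setIntegral_Icc_eq hM1 hM2 hf,
    setIntegral_Ioo_eq_of_eqOn_affine hM1 fun y hy => hf_affine y (Icc_subset_Icc_right hM2.le hy),
    setIntegral_Ioo_eq_of_eqOn_affine hM2 fun y hy => hf_affine y (Icc_subset_Icc_left hM1.le hy)]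
  ring

end Transformation

/-- the transformation `T` preserves the expected cost of each of the two
agents located at `x_L` and `x_R`. -/
theorem stmt3 (xL xR : ℝ) (h : xL < xR) (μ : Measure ℝ)
    (hprob : IsProbabilityMeasure μ) (hmom : Integrable (fun y => |y|) μ) :
    (∫ y, |y - xL| ∂(Tmeas xL xR μ) = ∫ y, |y - xL| ∂μ) ∧
    (∫ y, |y - xR| ∂(Tmeas xL xR μ) = ∫ y, |y - xR| ∂μ) := by
  have hid : Integrable (fun y : ℝ => y) μ :=
    (integrable_norm_iff measurable_id.aestronglyMeasurable).1 hmom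
  constructor
  · refine integral_Tmeas_eq_of_eqOn_affine (c := 1) (d := -xL) h
      (hid.sub (integrable_const xL)).abs fun y hy => ?_
    rw [abs_of_nonneg (sub_nonneg.2 hy.1)]
    ring
  · refine integral_Tmeas_eq_of_eqOn_affine (c := -1) (d := xR) h
      (hid.sub (integrable_const xR)).abs fun y hy => ?_
    rw [abs_of_nonpos (sub_nonpos.2 hy.2)]
    ring
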